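/- Let (Ω, 𝓕, μ) be a finite measure space and let f, g, h be real-valued measurable functions on Ω such that g ∈ L^1(Ω, μ), ∫_Ω g dμ = 0, the essential range of f is contained in {−1, 0, 1}, and |h| ≤ 1 μ-a.e. Let G = {x : g(x) ≠ 0} be the support of g and G^c its complement. Then I_{G^c,G}(f,g,h) + I_{G,G^c}(f,g,h) ≤ 2 ∫_G ∫_{G^c} |g(y)| · 1_𝓕(x,y) · 1_𝓗(x,y) dμ(x) dμ(y). -/

import Mathlib

open MeasureTheory ENNReal

/-- `I_{A,B}(f,g,h) = ∫_A (∫_B (f(x)+f(y))(g(x)-g(y))h(y) dμ(x)) dμ(y)`,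
the outer variable `y` ranging over `A` and the inner variable `x` over `B`. -/
noncomputable def oscI {Ω : Type*} [MeasurableSpace Ω] (μ : Measure Ω)
    (A B : Set Ω) (f g h : Ω → ℝ) : ℝ :=
  ∫ y in A, (∫ x in B, (f x + f y) * (g x - g y) * h y ∂μ) ∂μ

/-- The grid-like function `1_𝓤(x,y) = max(1_{supp u}(x), 1_{supp u}(y))`
associated with a function `u`. -/
noncomputable def gridFn {Ω : Type*} (u : Ω → ℝ) (x y : Ω) : ℝ :=
  max (Set.indicator {z | u z ≠ 0} (fun _ => (1 : ℝ)) x)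
    (Set.indicator {z | u z ≠ 0} (fun _ => (1 : ℝ)) y)

/-! With `G = supp g`, the outer variable `y ∈ G` and the inner one `x ∈ Gᶜ` (so `g x = 0`),
Fubini turns the two integrals into one over `G × Gᶜ` with integrand
`g y (f x + f y)(h x - h y)`. As `∫_G g = ∫ g = 0`, the term `2 g y f x h x` may be subtracted
for free, and then `|(a + s)(b - t) - 2ab| = |s(b - t) - a(b + t)| ≤ 2 max(|a|,|s|) max(|b|,|t|)`
bounds the integrand by `2 |g y| 1_𝓕(x,y) 1_𝓗(x,y)` whenever `|f|, |h| ≤ 1`. -/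

lemma MeasureTheory.Integrable.restrict_prod_restrict {α β E : Type*} [MeasurableSpace α]
    [MeasurableSpace β] [NormedAddCommGroup E] {μ : Measure α} {ν : Measure β} [SFinite μ]
    [SFinite ν] {F : α × β → E} (hF : Integrable F (μ.prod ν)) (A : Set α) (B : Set β) :
    Integrable F ((μ.restrict A).prod (ν.restrict B)) := by
  rw [Measure.prod_restrict]
  exact hF.restrict

lemma abs_add_abs_sub_le_two_mul_max (b t : ℝ) : |b + t| + |b - t| ≤ 2 * max |b| |t| := by
  obtain ⟨hb₁, hb₂⟩ := abs_le.mp (le_max_left |b| |t|)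
  obtain ⟨ht₁, ht₂⟩ := abs_le.mp (le_max_right |b| |t|)
  cases abs_cases (b + t) <;> cases abs_cases (b - t) <;> linarith

lemma abs_add_mul_sub_sub_two_mul_le (a s b t : ℝ) :
    |(a + s) * (b - t) - 2 * (a * b)| ≤ 2 * max |a| |s| * max |b| |t| :=
  calc |(a + s) * (b - t) - 2 * (a * b)| = |s * (b - t) - a * (b + t)| := by ring_nf
    _ ≤ |s| * |b - t| + |a| * |b + t| := by
        rw [← abs_mul, ← abs_mul]; exact abs_sub _ _
    _ ≤ max |a| |s| * |b - t| + max |a| |s| * |b + t| := by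
        gcongr
        exacts [le_max_right _ _, le_max_left _ _]
    _ ≤ 2 * max |a| |s| * max |b| |t| := by
        nlinarith [abs_add_abs_sub_le_two_mul_max b t, (abs_nonneg a).trans (le_max_left _ |s|)]

section gridFn

variable {Ω : Type*} {u : Ω → ℝ}

lemma gridFn_nonneg (x y : Ω) : 0 ≤ gridFn u x y :=
  le_max_of_le_left (Set.indicator_nonneg (fun _ _ => zero_le_one) x)

lemma gridFn_le_one (x y : Ω) : gridFn u x y ≤ 1 :=
  max_le (Set.indicator_le_self' (fun _ _ => zero_le_one) x)
    (Set.indicator_le_self' (fun _ _ => zero_le_one) y)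

lemma abs_le_indicator_support {x : Ω} (hx : |u x| ≤ 1) :
    |u x| ≤ Set.indicator {z | u z ≠ 0} (fun _ => (1 : ℝ)) x := by
  by_cases h : u x = 0 <;> simp [h, hx]

lemma max_abs_le_gridFn {x y : Ω} (hx : |u x| ≤ 1) (hy : |u y| ≤ 1) :
    max |u x| |u y| ≤ gridFn u x y :=
  max_le_max (abs_le_indicator_support hx) (abs_le_indicator_support hy)

lemma measurable_gridFn [MeasurableSpace Ω] (hu : Measurable u) :
    Measurable fun p : Ω × Ω => gridFn u p.1 p.2 := by
  have hind : Measurable (Set.indicator {z | u z ≠ 0} fun _ => (1 : ℝ)) :=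
    measurable_const.indicator (hu (measurableSet_singleton 0)).compl
  exact (hind.comp measurable_fst).max (hind.comp measurable_snd)

end gridFn

def oscKernel {Ω : Type*} (f g h : Ω → ℝ) (x y : Ω) : ℝ :=
  (f x + f y) * (g x - g y) * h y

section oscKernel

variable {Ω : Type*} {f g h : Ω → ℝ}

lemma oscKernel_add_swap_sub_le {x y : Ω} (hgx : g x = 0) (hfx : |f x| ≤ 1) (hfy : |f y| ≤ 1)
    (hhx : |h x| ≤ 1) (hhy : |h y| ≤ 1) :
    oscKernel f g h y x + oscKernel f g h x y - 2 * (g y * (f x * h x)) ≤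
      2 * (|g y| * gridFn f x y * gridFn h x y) := by
  have hkey : oscKernel f g h y x + oscKernel f g h x y - 2 * (g y * (f x * h x)) =
      g y * ((f x + f y) * (h x - h y) - 2 * (f x * h x)) := by
    simp only [oscKernel, hgx]; ring
  calc _ = g y * ((f x + f y) * (h x - h y) - 2 * (f x * h x)) := hkey
    _ ≤ |g y| * |(f x + f y) * (h x - h y) - 2 * (f x * h x)| := by
        rw [← abs_mul]; exact le_abs_self _
    _ ≤ |g y| * (2 * max |f x| |f y| * max |h x| |h y|) := by
        gcongr; exact abs_add_mul_sub_sub_two_mul_le _ _ _ _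
    _ ≤ |g y| * (2 * gridFn f x y * gridFn h x y) := by
        gcongr
        exacts [mul_nonneg zero_le_two (gridFn_nonneg x y), max_abs_le_gridFn hfx hfy,
          max_abs_le_gridFn hhx hhy]
    _ = 2 * (|g y| * gridFn f x y * gridFn h x y) := by ring

variable [MeasurableSpace Ω] {μ : Measure Ω}

lemma integrable_oscKernel [IsFiniteMeasure μ] {C D : ℝ} (hf : AEStronglyMeasurable f μ)
    (hfC : ∀ᵐ x ∂μ, |f x| ≤ C) (hg : Integrable g μ) (hh : AEStronglyMeasurable h μ)
    (hhD : ∀ᵐ x ∂μ, |h x| ≤ D) :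
    Integrable (fun p : Ω × Ω => oscKernel f g h p.1 p.2) (μ.prod μ) := by
  have hgg : Integrable (fun p : Ω × Ω => g p.1 - g p.2) (μ.prod μ) :=
    (hg.comp_fst μ).sub (hg.comp_snd μ)
  have hmeas : AEStronglyMeasurable (fun p : Ω × Ω => (f p.1 + f p.2) * h p.2) (μ.prod μ) :=
    ((hf.comp_fst).add hf.comp_snd).mul hh.comp_snd
  have hbound : ∀ᵐ p ∂μ.prod μ, ‖(f p.1 + f p.2) * h p.2‖ ≤ (C + C) * D := by
    filter_upwards [Measure.quasiMeasurePreserving_fst.ae hfC,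
      Measure.quasiMeasurePreserving_snd.ae hfC, Measure.quasiMeasurePreserving_snd.ae hhD]
      with p hf₁ hf₂ hh₂
    rw [Real.norm_eq_abs, abs_mul]
    exact mul_le_mul ((abs_add_le _ _).trans (add_le_add hf₁ hf₂)) hh₂ (abs_nonneg _)
      ((add_nonneg (abs_nonneg _) (abs_nonneg _)).trans (add_le_add hf₁ hf₂))
  exact (hgg.bdd_mul hmeas hbound).congr (ae_of_all _ fun p => by simp only [oscKernel]; ring)

lemma integrable_abs_mul_gridFn_mul_gridFn {ν ν' : Measure Ω} [IsFiniteMeasure ν']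
    (hg : Integrable g ν) (hf : Measurable f) (hh : Measurable h) :
    Integrable (fun p : Ω × Ω => |g p.1| * gridFn f p.2 p.1 * gridFn h p.2 p.1)
      (ν.prod ν') := by
  have hgrid : Measurable fun p : Ω × Ω => gridFn f p.2 p.1 * gridFn h p.2 p.1 :=
    ((measurable_gridFn hf).comp measurable_swap).mul
      ((measurable_gridFn hh).comp measurable_swap)
  refine ((hg.abs.comp_fst ν').mul_bdd hgrid.aestronglyMeasurable (c := 1)
    (ae_of_all _ fun p => ?_)).congr (ae_of_all _ fun p => (mul_assoc _ _ _).symm)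
  rw [Real.norm_eq_abs, abs_of_nonneg (mul_nonneg (gridFn_nonneg _ _) (gridFn_nonneg _ _))]
  exact mul_le_one₀ (gridFn_le_one _ _) (gridFn_nonneg _ _) (gridFn_le_one _ _)

lemma ae_oscKernel_add_swap_sub_le {A B : Set Ω} (hB : MeasurableSet B)
    (hgB : ∀ x ∈ B, g x = 0)
    (hf1 : ∀ᵐ x ∂μ, |f x| ≤ 1) (hh1 : ∀ᵐ x ∂μ, |h x| ≤ 1) :
    ∀ᵐ p ∂(μ.restrict A).prod (μ.restrict B),
      oscKernel f g h p.1 p.2 + oscKernel f g h p.2 p.1 - 2 * (g p.1 * (f p.2 * h p.2)) ≤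
        2 * (|g p.1| * gridFn f p.2 p.1 * gridFn h p.2 p.1) := by
  have fst {q : Ω → Prop} (hq : ∀ᵐ x ∂μ, q x) :
      ∀ᵐ p ∂(μ.restrict A).prod (μ.restrict B), q p.1 :=
    Measure.quasiMeasurePreserving_fst.ae (ae_restrict_of_ae hq)
  have snd {q : Ω → Prop} (hq : ∀ᵐ x ∂μ, q x) :
      ∀ᵐ p ∂(μ.restrict A).prod (μ.restrict B), q p.2 :=
    Measure.quasiMeasurePreserving_snd.ae (ae_restrict_of_ae hq)
  filter_upwards [Measure.quasiMeasurePreserving_snd.ae (ae_restrict_mem hB),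
    fst hf1, snd hf1, fst hh1, snd hh1] with p hp hf₁ hf₂ hh₁ hh₂
  exact oscKernel_add_swap_sub_le (hgB _ hp) hf₂ hf₁ hh₂ hh₁

variable [SFinite μ]

lemma oscI_eq_integral_prod {A B : Set Ω}
    (hk : Integrable (fun p : Ω × Ω => oscKernel f g h p.2 p.1)
      ((μ.restrict A).prod (μ.restrict B))) :
    oscI μ A B f g h = ∫ p, oscKernel f g h p.2 p.1 ∂(μ.restrict A).prod (μ.restrict B) :=
  (integral_prod _ hk).symm

lemma oscI_eq_integral_prod_symm {A B : Set Ω}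
    (hk : Integrable (fun p : Ω × Ω => oscKernel f g h p.1 p.2)
      ((μ.restrict B).prod (μ.restrict A))) :
    oscI μ A B f g h = ∫ p, oscKernel f g h p.1 p.2 ∂(μ.restrict B).prod (μ.restrict A) :=
  (integral_prod_symm _ hk).symm

/-- The subtracted term integrates to `2 (∫_A g) (∫_B f h) = 0`. -/
lemma oscI_add_oscI_eq_integral_prod {A B : Set Ω}
    (hK : Integrable (fun p : Ω × Ω => oscKernel f g h p.1 p.2) (μ.prod μ))
    (hg : Integrable g μ) (hfh : Integrable (fun x => f x * h x) μ)
    (hgA : ∫ x in A, g x ∂μ = 0) :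
    oscI μ B A f g h + oscI μ A B f g h =
      ∫ p, (oscKernel f g h p.1 p.2 + oscKernel f g h p.2 p.1 - 2 * (g p.1 * (f p.2 * h p.2)))
        ∂(μ.restrict A).prod (μ.restrict B) := by
  have hk₁ := hK.restrict_prod_restrict A B
  have hk₂ : Integrable (fun p : Ω × Ω => oscKernel f g h p.2 p.1) _ :=
    hK.swap.restrict_prod_restrict A B
  have hk : Integrable (fun p : Ω × Ω => oscKernel f g h p.1 p.2 + oscKernel f g h p.2 p.1) _ :=
    hk₁.add hk₂
  have hz := (hg.mul_prod hfh).restrict_prod_restrict A B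
  rw [oscI_eq_integral_prod_symm hk₁, oscI_eq_integral_prod hk₂,
    integral_sub hk (hz.const_mul 2), integral_add hk₁ hk₂, integral_const_mul,
    integral_prod_mul g (fun x => f x * h x), hgA, zero_mul, mul_zero, sub_zero]

end oscKernel

/-- Lemma 3.1: if `g ∈ L^1` has zero mean, the essential range of `f` is contained in
`{-1,0,1}`, and `|h| ≤ 1` a.e., then, with `G = supp g`,
`I_{Gᶜ,G}(f,g,h) + I_{G,Gᶜ}(f,g,h) ≤ 2 ∫_G ∫_{Gᶜ} |g(y)| 1_𝓕(x,y) 1_𝓗(x,y) dμ(x) dμ(y)`. -/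
theorem lemma31
    {Ω : Type*} [MeasurableSpace Ω] (μ : Measure Ω) [IsFiniteMeasure μ]
    (f g h : Ω → ℝ) (hf : Measurable f) (hg : Measurable g) (hh : Measurable h)
    (hgi : Integrable g μ) (hg0 : ∫ x, g x ∂μ = 0)
    (hfr : ∀ᵐ x ∂μ, f x = -1 ∨ f x = 0 ∨ f x = 1)
    (hh1 : ∀ᵐ x ∂μ, |h x| ≤ 1) :
    oscI μ {x | g x ≠ 0}ᶜ {x | g x ≠ 0} f g h + oscI μ {x | g x ≠ 0} {x | g x ≠ 0}ᶜ f g h ≤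
      2 * ∫ y in {x | g x ≠ 0},
            (∫ x in {x | g x ≠ 0}ᶜ, |g y| * gridFn f x y * gridFn h x y ∂μ) ∂μ := by
  set G : Set Ω := {x | g x ≠ 0}
  have hG : MeasurableSet G := (hg (measurableSet_singleton 0)).compl
  have hgGc : ∀ x ∈ Gᶜ, g x = 0 := fun x hx => not_not.mp hx
  have hgG : ∫ x in G, g x ∂μ = 0 :=
    (setIntegral_eq_integral_of_forall_compl_eq_zero hgGc).trans hg0
  have hf1 : ∀ᵐ x ∂μ, |f x| ≤ 1 :=
    hfr.mono fun x hx => by rcases hx with hx | hx | hx <;> simp [hx]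
  have hK := integrable_oscKernel hf.aestronglyMeasurable hf1 hgi hh.aestronglyMeasurable hh1
  have hfh : Integrable (fun x => f x * h x) μ :=
    (Integrable.of_bound hf.aestronglyMeasurable 1 (by simpa only [Real.norm_eq_abs] using hf1)
      ).mul_bdd hh.aestronglyMeasurable (c := 1) (by simpa only [Real.norm_eq_abs] using hh1)
  have hcentered :=
    ((hK.add hK.swap).sub ((hgi.mul_prod hfh).const_mul 2)).restrict_prod_restrict G Gᶜ
  have hr := integrable_abs_mul_gridFn_mul_gridFn (ν := μ.restrict G) (ν' := μ.restrict Gᶜ)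
    hgi.restrict hf hh
  rw [oscI_add_oscI_eq_integral_prod hK hgi hfh hgG, ← integral_prod _ hr, ← integral_const_mul]
  exact integral_mono_ae hcentered (hr.const_mul 2)
    (ae_oscKernel_add_swap_sub_le hG.compl hgGc hf1 hh1)
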